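/- arXiv:2410.23574 — 4 statements merged into one kernel-verified Lean document; each statement's English description precedes it below -/
import Mathlib

section
/- Suppose each of the functions f₁, …, f_T : (ℝ^d)^h → ℝ is β-smooth. Then C_T : (ℝ^d)^T → ℝ, C_T(x) = Σ_{t=1}^T f_t(x_{t−h+1:t}), is differentiable and its gradient is (βh)-Lipschitz, i.e. C_T is (βh)-smooth with respect to the Euclidean norm on (ℝ^d)^T. (This is Lemma 1(b), smoothness part, of the paper.) -/
/-- The sequence `x₁, …, x_T` padded with `x̄₀` for indices `t ≤ 0` (indices are `1`-based,
given as integers). -/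
noncomputable def pad {d : ℕ} (T : ℕ) (xbar : EuclideanSpace ℝ (Fin d))
    (x : Fin T → EuclideanSpace ℝ (Fin d)) (t : ℤ) : EuclideanSpace ℝ (Fin d) :=
  if ht : 1 ≤ t ∧ t ≤ T then x ⟨(t - 1).toNat, by omega⟩ else xbar

/-- The `t`-th window `x_{t-h+1:t} = (x_{t-h+1}, …, x_t) ∈ (ℝ^d)^h`, where the product
space carries the Euclidean (`L²`) norm. -/
noncomputable def window {d : ℕ} (h T : ℕ) (xbar : EuclideanSpace ℝ (Fin d))
    (x : Fin T → EuclideanSpace ℝ (Fin d)) (t : ℤ) :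
    PiLp 2 (fun _ : Fin h => EuclideanSpace ℝ (Fin d)) :=
  WithLp.toLp 2 (fun i : Fin h => pad T xbar x (t - h + 1 + i))

/-! Write `C_T x = F (W x + c)`, where `W x = (window h T 0 x (t + 1))_t` is the linear part of
the windowing, `c` collects the windows of `0` padded with `x̄₀`, and `F u = ∑ₜ fₜ (uₜ)` on the
`L²` product of `T` copies of `(ℝ^d)^h`. The gradient of `F` is `(∇fₜ (uₜ))ₜ`, hence
`β`-Lipschitz, and `∇C_T x = W† ∇F (W x + c)`, so `∇C_T` is `β ‖W‖²`-Lipschitz. Finally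
`‖W x‖² ≤ h ‖x‖²`, because every coordinate `x_s` lies in at most `h` windows. -/

open Finset
open scoped RealInnerProductSpace

theorem nonneg_of_forall_norm_sub_le_mul {E F : Type*} [NormedAddCommGroup E] [Nontrivial E]
    [SeminormedAddCommGroup F] {g : E → F} {β : ℝ}
    (hg : ∀ z w, ‖g z - g w‖ ≤ β * ‖z - w‖) : 0 ≤ β := by
  obtain ⟨z, hz⟩ := exists_ne (0 : E)
  have hz_le : 0 ≤ β * ‖z - 0‖ := (norm_nonneg _).trans (hg z 0)
  rw [sub_zero] at hz_le
  exact nonneg_of_mul_nonneg_left hz_le (norm_pos_iff.mpr hz)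

section AffinePrecomposition

variable {E F : Type*} [NormedAddCommGroup E] [InnerProductSpace ℝ E] [CompleteSpace E]
  [NormedAddCommGroup F] [InnerProductSpace ℝ F] [CompleteSpace F]

theorem HasGradientAt.comp_clm_add_const {g : F → ℝ} {g' : F} (A : E →L[ℝ] F) (c : F) {x : E}
    (hg : HasGradientAt g g' (A x + c)) :
    HasGradientAt (fun z => g (A z + c)) (ContinuousLinearMap.adjoint A g') x := by
  rw [hasGradientAt_iff_hasFDerivAt] at hg ⊢
  refine (hg.comp x (A.hasFDerivAt.add_const c)).congr_fderiv ?_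
  ext v
  simp [ContinuousLinearMap.adjoint_inner_left]

theorem norm_gradient_comp_clm_add_const_sub_le {g : F → ℝ} (hg : Differentiable ℝ g) {β : ℝ}
    (hβ : 0 ≤ β) (hlip : ∀ z w, ‖gradient g z - gradient g w‖ ≤ β * ‖z - w‖)
    (A : E →L[ℝ] F) (c : F) (x y : E) :
    ‖gradient (fun z => g (A z + c)) x - gradient (fun z => g (A z + c)) y‖ ≤
      β * ‖A‖ ^ 2 * ‖x - y‖ := by
  have hgrad : ∀ z, gradient (fun z => g (A z + c)) z =
      ContinuousLinearMap.adjoint A (gradient g (A z + c)) := fun z =>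
    ((hg _).hasGradientAt.comp_clm_add_const A c).gradient
  rw [hgrad, hgrad, ← map_sub (ContinuousLinearMap.adjoint A)]
  calc _ ≤ ‖A‖ * ‖gradient g (A x + c) - gradient g (A y + c)‖ := by
        simpa using (ContinuousLinearMap.adjoint A).le_opNorm
          (gradient g (A x + c) - gradient g (A y + c))
    _ ≤ ‖A‖ * (β * (‖A‖ * ‖x - y‖)) := by
        gcongr
        refine (hlip _ _).trans ?_
        rw [add_sub_add_right_eq_sub, ← map_sub]
        gcongr
        exact A.le_opNorm _
    _ = β * ‖A‖ ^ 2 * ‖x - y‖ := by ring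

end AffinePrecomposition

section SeparableSum

variable {ι : Type*} [Fintype ι] {F : ι → Type*} [∀ i, NormedAddCommGroup (F i)]
  [∀ i, InnerProductSpace ℝ (F i)] [∀ i, CompleteSpace (F i)] {f : ∀ i, F i → ℝ}

theorem hasGradientAt_sum_apply {u : PiLp 2 F} (hf : ∀ i, DifferentiableAt ℝ (f i) (u i)) :
    HasGradientAt (fun v : PiLp 2 F => ∑ i, f i (v i))
      (WithLp.toLp 2 fun i => gradient (f i) (u i)) u := by
  rw [hasGradientAt_iff_hasFDerivAt]
  refine (HasFDerivAt.fun_sum (u := univ) fun i _ =>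
    (hf i).hasFDerivAt.comp u (PiLp.hasFDerivAt_apply (𝕜 := ℝ) 2 u i)).congr_fderiv ?_
  ext v
  simp [PiLp.inner_apply, inner_gradient_left]

theorem norm_gradient_sum_apply_sub_le (hf : ∀ i, Differentiable ℝ (f i)) {β : ℝ} (hβ : 0 ≤ β)
    (hlip : ∀ i z w, ‖gradient (f i) z - gradient (f i) w‖ ≤ β * ‖z - w‖) (u v : PiLp 2 F) :
    ‖gradient (fun v : PiLp 2 F => ∑ i, f i (v i)) u -
        gradient (fun v : PiLp 2 F => ∑ i, f i (v i)) v‖ ≤ β * ‖u - v‖ := by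
  rw [(hasGradientAt_sum_apply fun i => (hf i) (u i)).gradient,
    (hasGradientAt_sum_apply fun i => (hf i) (v i)).gradient]
  refine le_of_sq_le_sq ?_ (by positivity)
  rw [mul_pow, PiLp.norm_sq_eq_of_L2, PiLp.norm_sq_eq_of_L2, mul_sum]
  gcongr with i
  simpa [mul_pow] using pow_le_pow_left₀ (norm_nonneg _) (hlip i (u i) (v i)) 2

end SeparableSum

section Window

variable {d : ℕ} (h T : ℕ)

theorem pad_eq_pad_zero_add (xbar : EuclideanSpace ℝ (Fin d))
    (x : Fin T → EuclideanSpace ℝ (Fin d)) (n : ℤ) :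
    pad T xbar x n = pad T 0 x n + pad T xbar 0 n := by
  unfold pad; split_ifs <;> simp

theorem pad_zero_add (x y : Fin T → EuclideanSpace ℝ (Fin d)) (n : ℤ) :
    pad T 0 (x + y) n = pad T 0 x n + pad T 0 y n := by
  unfold pad; split_ifs <;> simp

theorem pad_zero_smul (c : ℝ) (x : Fin T → EuclideanSpace ℝ (Fin d)) (n : ℤ) :
    pad T 0 (c • x) n = c • pad T 0 x n := by
  unfold pad; split_ifs <;> simp

theorem norm_sq_pad_zero (x : Fin T → EuclideanSpace ℝ (Fin d)) (n : ℤ) :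
    ‖pad T 0 x n‖ ^ 2 = ∑ s : Fin T, if (s : ℤ) + 1 = n then ‖x s‖ ^ 2 else 0 := by
  unfold pad
  split_ifs with hn
  · rw [sum_eq_single_of_mem ⟨(n - 1).toNat, by omega⟩ (mem_univ _), if_pos (by simp; omega)]
    intro s _ hs
    rw [if_neg]
    contrapose! hs
    ext
    simp only
    omega
  · rw [sum_eq_zero fun s _ => if_neg (by omega)]
    simp

theorem sum_norm_sq_pad_zero_add_le (x : Fin T → EuclideanSpace ℝ (Fin d)) (k : ℤ) :
    ∑ t : Fin T, ‖pad T 0 x (t + k)‖ ^ 2 ≤ ∑ s : Fin T, ‖x s‖ ^ 2 := by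
  simp only [norm_sq_pad_zero]
  rw [sum_comm]
  gcongr with s
  rw [← sum_filter, sum_const, nsmul_eq_mul]
  refine mul_le_of_le_one_left (by positivity) ?_
  exact_mod_cast card_le_one.mpr fun a ha b hb => by
    simp only [mem_filter, mem_univ, true_and] at ha hb
    omega

theorem window_eq_window_zero_add (xbar : EuclideanSpace ℝ (Fin d))
    (x : Fin T → EuclideanSpace ℝ (Fin d)) (t : ℤ) :
    window h T xbar x t = window h T 0 x t + window h T xbar 0 t := by
  ext1 i
  simp only [window, PiLp.add_apply]
  exact pad_eq_pad_zero_add T xbar x _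

noncomputable def windowsLM :
    (PiLp 2 fun _ : Fin T => EuclideanSpace ℝ (Fin d)) →ₗ[ℝ]
      PiLp 2 fun _ : Fin T => PiLp 2 fun _ : Fin h => EuclideanSpace ℝ (Fin d) where
  toFun x := WithLp.toLp 2 fun t : Fin T => window h T 0 x ((t : ℤ) + 1)
  map_add' x y := by
    ext t i : 2
    simp only [window, PiLp.toLp_apply, PiLp.add_apply, WithLp.ofLp_add]
    exact pad_zero_add T x y _
  map_smul' c x := by
    ext t i : 2
    simp only [window, PiLp.toLp_apply, PiLp.smul_apply, WithLp.ofLp_smul, RingHom.id_apply]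
    exact pad_zero_smul T c x _

theorem norm_windowsLM_apply_sq_le (x : PiLp 2 fun _ : Fin T => EuclideanSpace ℝ (Fin d)) :
    ‖windowsLM h T x‖ ^ 2 ≤ h * ‖x‖ ^ 2 := by
  simp only [
    PiLp.norm_sq_eq_of_L2 fun _ : Fin T => PiLp 2 fun _ : Fin h => EuclideanSpace ℝ (Fin d),
    PiLp.norm_sq_eq_of_L2 fun _ : Fin h => EuclideanSpace ℝ (Fin d),
    PiLp.norm_sq_eq_of_L2 fun _ : Fin T => EuclideanSpace ℝ (Fin d)]
  rw [sum_comm]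
  calc ∑ i : Fin h, ∑ t : Fin T, ‖pad T 0 x ((t : ℤ) + 1 - h + 1 + i)‖ ^ 2
      = ∑ i : Fin h, ∑ t : Fin T, ‖pad T 0 x (t + (2 - h + i))‖ ^ 2 := by
        simp only [show ∀ t i : ℤ, t + 1 - h + 1 + i = t + (2 - h + i) from fun t i => by ring]
    _ ≤ ∑ _i : Fin h, ∑ s : Fin T, ‖x s‖ ^ 2 :=
        sum_le_sum fun i _ => sum_norm_sq_pad_zero_add_le T x _
    _ = h * ∑ s : Fin T, ‖x s‖ ^ 2 := by simp

theorem norm_windowsLM_apply_le (x : PiLp 2 fun _ : Fin T => EuclideanSpace ℝ (Fin d)) :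
    ‖windowsLM h T x‖ ≤ √h * ‖x‖ := by
  refine le_of_sq_le_sq ?_ (by positivity)
  rw [mul_pow, Real.sq_sqrt (Nat.cast_nonneg h)]
  exact norm_windowsLM_apply_sq_le h T x

noncomputable def windowsCLM :
    (PiLp 2 fun _ : Fin T => EuclideanSpace ℝ (Fin d)) →L[ℝ]
      PiLp 2 fun _ : Fin T => PiLp 2 fun _ : Fin h => EuclideanSpace ℝ (Fin d) :=
  (windowsLM h T).mkContinuous √h (norm_windowsLM_apply_le h T)

theorem windowsCLM_apply (x : PiLp 2 fun _ : Fin T => EuclideanSpace ℝ (Fin d)) (t : Fin T) :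
    windowsCLM h T x t = window h T 0 x ((t : ℤ) + 1) := rfl

theorem norm_windowsCLM_sq_le :
    ‖(windowsCLM h T : (PiLp 2 fun _ : Fin T => EuclideanSpace ℝ (Fin d)) →L[ℝ] _)‖ ^ 2 ≤ h :=
  calc _ ≤ √h ^ 2 := by
        gcongr
        exact LinearMap.mkContinuous_norm_le _ (Real.sqrt_nonneg _) _
    _ = h := Real.sq_sqrt (Nat.cast_nonneg h)

end Window

/-- If each `f_t : (ℝ^d)^h → ℝ` is `β`-smooth (differentiable with
`β`-Lipschitz gradient), then `C_T x = ∑_{t=1}^T f_t (x_{t-h+1:t})` is differentiable and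
its gradient is `(βh)`-Lipschitz on `(ℝ^d)^T` with the Euclidean norm. -/
theorem CT_smooth {d h T : ℕ} (hd : 1 ≤ d) (hh : 1 ≤ h) (hT : 1 ≤ T)
    (xbar : EuclideanSpace ℝ (Fin d)) (β : ℝ)
    (f : Fin T → (PiLp 2 fun _ : Fin h => EuclideanSpace ℝ (Fin d)) → ℝ)
    (hdiff : ∀ t, Differentiable ℝ (f t))
    (hlip : ∀ t, ∀ z w, ‖gradient (f t) z - gradient (f t) w‖ ≤ β * ‖z - w‖) :
    Differentiable ℝ
        (fun x : PiLp 2 fun _ : Fin T => EuclideanSpace ℝ (Fin d) =>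
          ∑ t : Fin T, f t (window h T xbar x ((t : ℤ) + 1))) ∧
      ∀ x y : PiLp 2 fun _ : Fin T => EuclideanSpace ℝ (Fin d),
        ‖gradient (fun z : PiLp 2 fun _ : Fin T => EuclideanSpace ℝ (Fin d) =>
              ∑ t : Fin T, f t (window h T xbar z ((t : ℤ) + 1))) x -
            gradient (fun z : PiLp 2 fun _ : Fin T => EuclideanSpace ℝ (Fin d) =>
              ∑ t : Fin T, f t (window h T xbar z ((t : ℤ) + 1))) y‖ ≤
          β * h * ‖x - y‖ := by
  have : NeZero d := ⟨by omega⟩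
  have : NeZero h := ⟨by omega⟩
  have hβ : 0 ≤ β := nonneg_of_forall_norm_sub_le_mul (hlip ⟨0, hT⟩)
  let F (u : PiLp 2 fun _ : Fin T => PiLp 2 fun _ : Fin h => EuclideanSpace ℝ (Fin d)) : ℝ :=
    ∑ t, f t (u t)
  let c : PiLp 2 fun _ : Fin T => PiLp 2 fun _ : Fin h => EuclideanSpace ℝ (Fin d) :=
    WithLp.toLp 2 fun t : Fin T => window h T xbar 0 ((t : ℤ) + 1)
  have hC : (fun x : PiLp 2 fun _ : Fin T => EuclideanSpace ℝ (Fin d) =>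
      ∑ t : Fin T, f t (window h T xbar x ((t : ℤ) + 1))) = fun x => F (windowsCLM h T x + c) := by
    funext x
    simp only [F, c, PiLp.add_apply, windowsCLM_apply, window_eq_window_zero_add h T xbar x]
  have hF : Differentiable ℝ F := by fun_prop
  rw [hC]
  refine ⟨hF.comp ((windowsCLM h T).differentiable.add_const c), fun x y => ?_⟩
  calc _ ≤ β * ‖windowsCLM h T‖ ^ 2 * ‖x - y‖ :=
        norm_gradient_comp_clm_add_const_sub_le hF hβ
          (norm_gradient_sum_apply_sub_le hdiff hβ hlip) _ c x y
    _ ≤ β * h * ‖x - y‖ := by gcongr; exact norm_windowsCLM_sq_le h T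
end

section
/- Online gradient descent with gradient errors for strongly convex losses: Let X ⊆ ℝ^d be a nonempty closed convex set with ‖a − b‖ ≤ D for all a, b ∈ X, let μ > 0 and set η_t = 1/(tμ) for t ≥ 1. Let h₁, …, h_T : ℝ^d → ℝ be differentiable and μ-strongly convex, let e₁, …, e_T ∈ ℝ^d be arbitrary error vectors, let x₁ ∈ X, and define x_{t+1} = Π_X(x_t − η_t(∇h_t(x_t) + e_t)) for t = 1, …, T. Then for any comparator points x*₁, …, x*_T ∈ X, Σ_{t=1}^T (h_t(x_t) − h_t(x*_t)) ≤ Σ_{t=1}^{T−1} (D/η_t)·‖x*_t − x*_{t+1}‖ + Σ_{t=1}^T D·‖e_t‖ + Σ_{t=1}^T η_t·‖∇h_t(x_t)‖² + Σ_{t=1}^T η_t·‖e_t‖². (This is inequality (A.5) underlying Theorem 1 of the paper.) -/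
/-!
Strong convexity bounds the regret of round `t` by `⟪∇h_t(x_t), x_t - x*_t⟫ - (μ/2)‖x_t - x*_t‖²`.
Since `x*_t ∈ X`, projecting onto `X` does not increase the distance to `x*_t`, so the
gradient step bounds that inner product by
`(‖x_t - x*_t‖² - ‖x_{t+1} - x*_t‖²) / (2η_t) + (η_t/2)‖∇h_t(x_t) + e_t‖² + D‖e_t‖`.
With `η_t = 1/(tμ)` the coefficient `1/(2η_t) - μ/2 = (t-1)μ/2` of `‖x_t - x*_t‖²` equals the
coefficient of `‖x_t - x*_{t-1}‖²` from the previous round, so the distance terms telescope;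
the comparator drift from `x*_{t-1}` to `x*_t` changes the squared distance by at most
`2D‖x*_{t-1} - x*_t‖`.
-/

open Finset
open scoped RealInnerProductSpace

theorem ConvexOn.add_apply_sub_le_of_hasFDerivAt {E : Type*} [NormedAddCommGroup E]
    [NormedSpace ℝ E] {φ : E → ℝ} {φ' : E →L[ℝ] ℝ} {a : E} (hφ : ConvexOn ℝ Set.univ φ)
    (hφ' : HasFDerivAt φ φ' a) (b : E) : φ a + φ' (b - a) ≤ φ b := by
  have hline : HasDerivAt (fun s : ℝ => φ (AffineMap.lineMap a b s)) (φ' (b - a)) 0 :=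
    hφ'.comp_hasDerivAt_of_eq 0 AffineMap.hasDerivAt_lineMap (by simp)
  have hslope := (hφ.comp_affineMap (AffineMap.lineMap a b)).le_slope_of_hasDerivAt
    (Set.mem_univ 0) (Set.mem_univ 1) one_pos hline
  simp only [slope_def_field, Function.comp_apply, AffineMap.lineMap_apply_zero,
    AffineMap.lineMap_apply_one, sub_zero, div_one] at hslope
  linarith

theorem norm_sub_sq_le_norm_sub_sq_add {E : Type*} [SeminormedAddCommGroup E] {u a b : E}
    {D : ℝ} (ha : ‖u - a‖ ≤ D) (hb : ‖u - b‖ ≤ D) :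
    ‖u - b‖ ^ 2 ≤ ‖u - a‖ ^ 2 + 2 * D * ‖a - b‖ := by
  have hdiff : ‖u - b‖ - ‖u - a‖ ≤ ‖a - b‖ := by
    simpa only [sub_sub_sub_cancel_left] using norm_sub_norm_le (u - b) (u - a)
  nlinarith [norm_nonneg (u - a), norm_nonneg (u - b), norm_nonneg (a - b)]

theorem sum_Icc_sub_le_sum_Icc_of_le_add {A B C : ℕ → ℝ} {n : ℕ} (h₁ : A 1 ≤ 0)
    (hstep : ∀ t, 1 ≤ t → t < n → A (t + 1) ≤ B t + C t) (hn : 0 ≤ B n) :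
    ∑ t ∈ Icc 1 n, (A t - B t) ≤ ∑ t ∈ Icc 1 (n - 1), C t := by
  obtain _ | n := n
  · simp
  have key : ∀ m ≤ n, ∑ t ∈ Icc 1 (m + 1), (A t - B t) + B (m + 1) ≤ ∑ t ∈ Icc 1 m, C t := by
    intro m hm
    induction m with
    | zero => simpa using h₁
    | succ m ih =>
      rw [sum_Icc_succ_top (by omega), sum_Icc_succ_top (f := C) (by omega)]
      linarith [ih (by omega), hstep (m + 1) (by omega) (by omega)]
  rw [Nat.add_sub_cancel]
  linarith [key n le_rfl]

section InnerProductSpace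

variable {E : Type*} [NormedAddCommGroup E] [InnerProductSpace ℝ E]

theorem StrongConvexOn.add_inner_add_le_of_hasGradientAt [CompleteSpace E] {f : E → ℝ}
    {μ : ℝ} {g a : E} (hf : StrongConvexOn Set.univ μ f) (hg : HasGradientAt f g a) (b : E) :
    f a + ⟪g, b - a⟫ + μ / 2 * ‖b - a‖ ^ 2 ≤ f b := by
  have hφ := (strongConvexOn_iff_convex.mp hf).add_apply_sub_le_of_hasFDerivAt
    (hg.hasFDerivAt.sub ((hasStrictFDerivAt_norm_sq a).hasFDerivAt.const_mul (μ / 2))) b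
  have hsq : ‖b‖ ^ 2 = ‖a‖ ^ 2 + 2 * ⟪a, b - a⟫ + ‖b - a‖ ^ 2 := by
    rw [← norm_add_sq_real, add_sub_cancel]
  simp only [sub_apply, smul_apply,
    InnerProductSpace.toDual_apply_apply, innerSL_apply_apply, smul_eq_mul, nsmul_eq_mul,
    Nat.cast_ofNat] at hφ
  linear_combination hφ - μ / 2 * hsq

theorem Convex.inner_sub_nonpos_of_isMinOn {K : Set E} (hK : Convex ℝ K) {w p z : E}
    (hp : p ∈ K) (hmin : IsMinOn (‖· - w‖) K p) (hz : z ∈ K) : ⟪w - p, z - p⟫ ≤ 0 := by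
  refine (norm_eq_iInf_iff_real_inner_le_zero hK hp).mp ?_ z hz
  have : Nonempty K := ⟨⟨p, hp⟩⟩
  refine le_antisymm (le_ciInf fun q => ?_) (ciInf_le (f := fun q : K => ‖w - q‖)
    ⟨0, Set.forall_mem_range.2 fun q => norm_nonneg _⟩ ⟨p, hp⟩)
  simpa only [norm_sub_rev w] using isMinOn_iff.mp hmin q q.2

theorem Convex.norm_sub_le_of_isMinOn {K : Set E} (hK : Convex ℝ K) {w p z : E}
    (hp : p ∈ K) (hmin : IsMinOn (‖· - w‖) K p) (hz : z ∈ K) : ‖p - z‖ ≤ ‖w - z‖ := by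
  have hvi := hK.inner_sub_nonpos_of_isMinOn hp hmin hz
  have hexp : ‖w - z‖ ^ 2 = ‖w - p‖ ^ 2 - 2 * ⟪w - p, z - p⟫ + ‖p - z‖ ^ 2 := by
    rw [← norm_sub_rev z p, ← norm_sub_sq_real, sub_sub_sub_cancel_right]
  refine (sq_le_sq₀ (norm_nonneg _) (norm_nonneg _)).mp ?_
  nlinarith [sq_nonneg ‖w - p‖]

theorem StrongConvexOn.sub_le_of_gradient_step [CompleteSpace E] {f : E → ℝ} {μ c D : ℝ}
    {g e y z p : E} (hf : StrongConvexOn Set.univ μ f) (hg : HasGradientAt f g y) (hc : 0 < c)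
    (hyz : ‖y - z‖ ≤ D) (hp : ‖p - z‖ ≤ ‖y - (1 / c) • (g + e) - z‖) :
    f y - f z ≤ ((c - μ) / 2 * ‖y - z‖ ^ 2 - c / 2 * ‖p - z‖ ^ 2)
      + (D * ‖e‖ + 1 / c * ‖g‖ ^ 2 + 1 / c * ‖e‖ ^ 2) := by
  have hsc := hf.add_inner_add_le_of_hasGradientAt hg z
  have hstep : ‖p - z‖ ^ 2 ≤ ‖y - z‖ ^ 2 - 2 / c * ⟪g + e, y - z⟫ + (1 / c) ^ 2 * ‖g + e‖ ^ 2 :=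
    calc ‖p - z‖ ^ 2 ≤ ‖y - z - (1 / c) • (g + e)‖ ^ 2 := by
          rw [sub_right_comm]; exact pow_le_pow_left₀ (norm_nonneg _) hp 2
      _ = _ := by
          rw [norm_sub_sq_real, inner_smul_right, norm_smul, real_inner_comm, mul_pow,
            Real.norm_of_nonneg (one_div_pos.mpr hc).le]
          ring
  have herr : -⟪e, y - z⟫ ≤ D * ‖e‖ := by
    rw [← inner_neg_right, neg_sub, mul_comm]
    exact (real_inner_le_norm _ _).trans
      (mul_le_mul_of_nonneg_left ((norm_sub_rev z y).trans_le hyz) (norm_nonneg e))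
  have hpar : ‖g + e‖ ^ 2 ≤ 2 * ‖g‖ ^ 2 + 2 * ‖e‖ ^ 2 := by
    have := norm_add_sq_real g e
    have := norm_sub_sq_real g e
    nlinarith [sq_nonneg ‖g - e‖]
  have hcc : c * (1 / c) = 1 := mul_one_div_cancel hc.ne'
  rw [← neg_sub y z, norm_neg, inner_neg_right] at hsc
  rw [inner_add_left] at hstep
  linear_combination c / 2 * hstep + hsc + herr + 1 / (2 * c) * hpar
    - (⟪g, y - z⟫ + ⟪e, y - z⟫ - 1 / (2 * c) * ‖g + e‖ ^ 2) * hcc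

end InnerProductSpace

theorem ogd_with_errors_regret_general {d : ℕ} (X : Set (EuclideanSpace ℝ (Fin d)))
    (hXconv : Convex ℝ X)
    (D : ℝ) (hD : ∀ a ∈ X, ∀ b ∈ X, ‖a - b‖ ≤ D)
    (μ : ℝ) (hμ : 0 < μ) (T : ℕ)
    (h : ℕ → EuclideanSpace ℝ (Fin d) → ℝ)
    (hdiff : ∀ t, 1 ≤ t → t ≤ T → Differentiable ℝ (h t))
    (hsc : ∀ t, 1 ≤ t → t ≤ T →
      ConvexOn ℝ Set.univ (fun z => h t z - μ / 2 * ‖z‖ ^ 2))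
    (e : ℕ → EuclideanSpace ℝ (Fin d))
    (proj : EuclideanSpace ℝ (Fin d) → EuclideanSpace ℝ (Fin d))
    (hproj : ∀ w, proj w ∈ X ∧ ∀ z ∈ X, ‖proj w - w‖ ≤ ‖z - w‖)
    (x : ℕ → EuclideanSpace ℝ (Fin d)) (hx1 : x 1 ∈ X)
    (hupd : ∀ t, 1 ≤ t → t ≤ T →
      x (t + 1) = proj (x t - (1 / (t * μ)) • (gradient (h t) (x t) + e t)))
    (xstar : ℕ → EuclideanSpace ℝ (Fin d))
    (hxstar : ∀ t, 1 ≤ t → t ≤ T → xstar t ∈ X) :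
    (∑ t ∈ Finset.Icc 1 T, (h t (x t) - h t (xstar t))) ≤
      (∑ t ∈ Finset.Icc 1 (T - 1), D / (1 / (t * μ)) * ‖xstar t - xstar (t + 1)‖) +
        (∑ t ∈ Finset.Icc 1 T, D * ‖e t‖) +
        (∑ t ∈ Finset.Icc 1 T, (1 / (t * μ)) * ‖gradient (h t) (x t)‖ ^ 2) +
        ∑ t ∈ Finset.Icc 1 T, (1 / (t * μ)) * ‖e t‖ ^ 2 := by
  have hmem : ∀ t, 1 ≤ t → t ≤ T + 1 → x t ∈ X := by
    rintro (_ | _ | t) h1 h2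
    · omega
    · exact hx1
    · rw [hupd (t + 1) (by omega) (by omega)]; exact (hproj _).1
  have hround : ∀ t ∈ Icc 1 T, h t (x t) - h t (xstar t) ≤
      (((t : ℝ) * μ - μ) / 2 * ‖x t - xstar t‖ ^ 2 - t * μ / 2 * ‖x (t + 1) - xstar t‖ ^ 2)
        + (D * ‖e t‖ + 1 / (t * μ) * ‖gradient (h t) (x t)‖ ^ 2 + 1 / (t * μ) * ‖e t‖ ^ 2) := by
    intro t ht
    obtain ⟨h1, h2⟩ := mem_Icc.mp ht
    refine (strongConvexOn_iff_convex.mpr (hsc t h1 h2)).sub_le_of_gradient_step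
      (hdiff t h1 h2).differentiableAt.hasGradientAt (mul_pos (Nat.cast_pos.mpr h1) hμ)
      (hD _ (hmem t h1 (by omega)) _ (hxstar t h1 h2)) ?_
    rw [hupd t h1 h2]
    exact hXconv.norm_sub_le_of_isMinOn (hproj _).1 (hproj _).2 (hxstar t h1 h2)
  have hdrift : ∀ t, 1 ≤ t → t < T →
      (((t + 1 : ℕ) : ℝ) * μ - μ) / 2 * ‖x (t + 1) - xstar (t + 1)‖ ^ 2 ≤
        t * μ / 2 * ‖x (t + 1) - xstar t‖ ^ 2 + D / (1 / (t * μ)) * ‖xstar t - xstar (t + 1)‖ := by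
    intro t h1 h2
    have hxt := hmem (t + 1) (by omega) (by omega)
    have := norm_sub_sq_le_norm_sub_sq_add (hD _ hxt _ (hxstar t h1 h2.le))
      (hD _ hxt _ (hxstar (t + 1) (by omega) h2))
    rw [one_div, div_inv_eq_mul]
    push_cast
    linear_combination (t : ℝ) * μ / 2 * this
  have htele := sum_Icc_sub_le_sum_Icc_of_le_add
    (A := fun t : ℕ => ((t : ℝ) * μ - μ) / 2 * ‖x t - xstar t‖ ^ 2)
    (B := fun t : ℕ => (t : ℝ) * μ / 2 * ‖x (t + 1) - xstar t‖ ^ 2)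
    (by norm_num) hdrift (by positivity)
  have hregret := sum_le_sum hround
  simp only [sum_add_distrib] at htele hregret ⊢
  linarith

/-- Regret bound for online gradient descent with gradient errors on
strongly convex losses: with step sizes `η_t = 1/(tμ)`, projections onto a closed convex
set `X` of diameter at most `D`, losses `h_t` that are differentiable and `μ`-strongly
convex, error vectors `e_t`, and iterates `x_{t+1} = Π_X(x_t − η_t(∇h_t(x_t) + e_t))`
starting from `x₁ ∈ X`, for any comparators `x*_t ∈ X`:
`∑_{t=1}^T (h_t(x_t) − h_t(x*_t)) ≤ ∑_{t=1}^{T−1} (D/η_t)‖x*_t − x*_{t+1}‖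
  + ∑_{t=1}^T D‖e_t‖ + ∑_{t=1}^T η_t‖∇h_t(x_t)‖² + ∑_{t=1}^T η_t‖e_t‖²`. -/
theorem ogd_with_errors_regret {d : ℕ} (X : Set (EuclideanSpace ℝ (Fin d)))
    (hXne : X.Nonempty) (hXcl : IsClosed X) (hXconv : Convex ℝ X)
    (D : ℝ) (hD : ∀ a ∈ X, ∀ b ∈ X, ‖a - b‖ ≤ D)
    (μ : ℝ) (hμ : 0 < μ) (T : ℕ)
    (h : ℕ → EuclideanSpace ℝ (Fin d) → ℝ)
    (hdiff : ∀ t, 1 ≤ t → t ≤ T → Differentiable ℝ (h t))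
    (hsc : ∀ t, 1 ≤ t → t ≤ T →
      ConvexOn ℝ Set.univ (fun z => h t z - μ / 2 * ‖z‖ ^ 2))
    (e : ℕ → EuclideanSpace ℝ (Fin d))
    (proj : EuclideanSpace ℝ (Fin d) → EuclideanSpace ℝ (Fin d))
    (hproj : ∀ w, proj w ∈ X ∧ ∀ z ∈ X, ‖proj w - w‖ ≤ ‖z - w‖)
    (x : ℕ → EuclideanSpace ℝ (Fin d)) (hx1 : x 1 ∈ X)
    (hupd : ∀ t, 1 ≤ t → t ≤ T →
      x (t + 1) = proj (x t - (1 / (t * μ)) • (gradient (h t) (x t) + e t)))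
    (xstar : ℕ → EuclideanSpace ℝ (Fin d))
    (hxstar : ∀ t, 1 ≤ t → t ≤ T → xstar t ∈ X) :
    (∑ t ∈ Finset.Icc 1 T, (h t (x t) - h t (xstar t))) ≤
      (∑ t ∈ Finset.Icc 1 (T - 1), D / (1 / (t * μ)) * ‖xstar t - xstar (t + 1)‖) +
        (∑ t ∈ Finset.Icc 1 T, D * ‖e t‖) +
        (∑ t ∈ Finset.Icc 1 T, (1 / (t * μ)) * ‖gradient (h t) (x t)‖ ^ 2) +
        ∑ t ∈ Finset.Icc 1 T, (1 / (t * μ)) * ‖e t‖ ^ 2 :=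
  ogd_with_errors_regret_general X hXconv D hD μ hμ T h hdiff hsc e proj hproj x hx1 hupd xstar
    hxstar
end

section
/- One step of projected gradient descent with gradient error on a strongly convex function: Let X ⊆ ℝ^d be a nonempty closed convex set, let h : ℝ^d → ℝ be differentiable and μ-strongly convex with μ > 0, let x ∈ ℝ^d, x* ∈ X, e ∈ ℝ^d, η > 0, and set x⁺ = Π_X(x − η(∇h(x) + e)). Then h(x) − h(x*) ≤ (‖x* − x‖² − ‖x* − x⁺‖²)/(2η) + ⟨x* − x, e⟩ + η‖∇h(x)‖² + η‖e‖² − (μ/2)‖x − x*‖². -/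
/-!
Strong convexity gives `h x - h x* ≤ -⟪x* - x, ∇h x⟫ - μ/2 ‖x - x*‖²`. Projecting onto the convex
set `X` does not move a point farther from `x* ∈ X`, so `‖x* - x⁺‖² ≤ ‖x* - x + η (∇h x + e)‖²`;
expanding this square and using `‖∇h x + e‖² ≤ 2‖∇h x‖² + 2‖e‖²` bounds `-⟪x* - x, ∇h x⟫` by the
remaining terms.
-/

open scoped RealInnerProductSpace

open Set

section FirstOrder

variable {E : Type*} [NormedAddCommGroup E]

theorem ConvexOn.add_apply_sub_le_of_hasFDerivAt_s13 [NormedSpace ℝ E] {s : Set E} {f : E → ℝ}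
    {f' : E →L[ℝ] ℝ} {x y : E} (hf : ConvexOn ℝ s f) (hx : x ∈ s) (hy : y ∈ s)
    (hf' : HasFDerivAt f f' x) : f x + f' (y - x) ≤ f y := by
  set ℓ : ℝ →ᵃ[ℝ] E := AffineMap.lineMap x y
  have hconv : ConvexOn ℝ (ℓ ⁻¹' s) (f ∘ ℓ) := hf.comp_affineMap ℓ
  have hderiv : HasDerivAt (f ∘ ℓ) (f' (y - x)) 0 :=
    hf'.comp_hasDerivAt_of_eq 0 AffineMap.hasDerivAt_lineMap (by simp [ℓ])
  have hslope := hconv.le_slope_of_hasDerivAt (by simpa [ℓ]) (by simpa [ℓ]) one_pos hderiv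
  simp only [slope_def_field, Function.comp_apply, ℓ, AffineMap.lineMap_apply_zero,
    AffineMap.lineMap_apply_one, sub_zero, div_one] at hslope
  linarith

theorem StrongConvexOn.add_apply_sub_add_sq_le_of_hasFDerivAt [InnerProductSpace ℝ E]
    {s : Set E} {f : E → ℝ} {f' : E →L[ℝ] ℝ} {μ : ℝ} {x y : E} (hf : StrongConvexOn s μ f)
    (hx : x ∈ s) (hy : y ∈ s) (hf' : HasFDerivAt f f' x) :
    f x + f' (y - x) + μ / 2 * ‖y - x‖ ^ 2 ≤ f y := by
  have hdiff : HasFDerivAt (fun z => f z - μ / 2 * ‖z‖ ^ 2)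
      (f' - (μ / 2) • 2 • innerSL ℝ x) x :=
    hf'.sub ((hasStrictFDerivAt_norm_sq x).hasFDerivAt.const_smul (μ / 2))
  have key := (strongConvexOn_iff_convex.1 hf).add_apply_sub_le_of_hasFDerivAt_s13 hx hy hdiff
  simp only [sub_apply, smul_apply, innerSL_apply_apply, smul_eq_mul, nsmul_eq_mul,
    Nat.cast_ofNat, inner_sub_right, real_inner_self_eq_norm_sq] at key
  rw [norm_sub_sq_real, real_inner_comm]
  linarith

end FirstOrder

section Projection

variable {F : Type*} [NormedAddCommGroup F] [InnerProductSpace ℝ F] {K : Set F} {w p a : F}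

theorem IsMinOn.real_inner_sub_sub_nonpos (hK : Convex ℝ K) (hp : p ∈ K)
    (hmin : IsMinOn (‖· - w‖) K p) (ha : a ∈ K) : ⟪w - p, a - p⟫ ≤ 0 := by
  have : Nonempty K := ⟨⟨p, hp⟩⟩
  refine (norm_eq_iInf_iff_real_inner_le_zero hK hp).1 ?_ a ha
  refine le_antisymm (le_ciInf fun z => ?_) ?_
  · simpa only [norm_sub_rev w] using isMinOn_iff.1 hmin z z.2
  · exact ciInf_le ⟨0, by rintro _ ⟨z, rfl⟩; positivity⟩ (⟨p, hp⟩ : K)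

theorem IsMinOn.norm_sub_le_norm_sub (hK : Convex ℝ K) (hp : p ∈ K)
    (hmin : IsMinOn (‖· - w‖) K p) (ha : a ∈ K) : ‖a - p‖ ≤ ‖a - w‖ := by
  have hvi := hmin.real_inner_sub_sub_nonpos hK hp ha
  have hsplit : a - w = (a - p) - (w - p) := by abel
  have : ‖a - p‖ ^ 2 ≤ ‖a - w‖ ^ 2 := by
    rw [hsplit, @norm_sub_sq_real _ _ _ (a - p) (w - p), real_inner_comm]
    nlinarith [sq_nonneg ‖w - p‖]
  exact (pow_le_pow_iff_left₀ (norm_nonneg _) (norm_nonneg _) two_ne_zero).1 this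

end Projection

theorem pgd_one_step_general {d : ℕ} (X : Set (EuclideanSpace ℝ (Fin d)))
    (hXconv : Convex ℝ X)
    (h : EuclideanSpace ℝ (Fin d) → ℝ) (μ : ℝ)
    (hdiff : Differentiable ℝ h)
    (hsc : ConvexOn ℝ Set.univ (fun z => h z - μ / 2 * ‖z‖ ^ 2))
    (x xstar : EuclideanSpace ℝ (Fin d)) (hxstar : xstar ∈ X)
    (e : EuclideanSpace ℝ (Fin d)) (η : ℝ) (hη : 0 < η)
    (proj : EuclideanSpace ℝ (Fin d) → EuclideanSpace ℝ (Fin d))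
    (hproj : ∀ w, proj w ∈ X ∧ ∀ z ∈ X, ‖proj w - w‖ ≤ ‖z - w‖)
    (xplus : EuclideanSpace ℝ (Fin d))
    (hxplus : xplus = proj (x - η • (gradient h x + e))) :
    h x - h xstar ≤
      (‖xstar - x‖ ^ 2 - ‖xstar - xplus‖ ^ 2) / (2 * η) + ⟪xstar - x, e⟫ +
        η * ‖gradient h x‖ ^ 2 + η * ‖e‖ ^ 2 - μ / 2 * ‖x - xstar‖ ^ 2 := by
  set g := gradient h x
  set w := x - η • (g + e)
  have hfirst : h x + ⟪g, xstar - x⟫ + μ / 2 * ‖xstar - x‖ ^ 2 ≤ h xstar := by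
    simpa only [g, gradient, InnerProductSpace.toDual_symm_apply] using
      (strongConvexOn_iff_convex.2 hsc).add_apply_sub_add_sq_le_of_hasFDerivAt
        (mem_univ x) (mem_univ xstar) (hdiff x).hasFDerivAt
  have hnonexp : ‖xstar - xplus‖ ^ 2 ≤ ‖xstar - w‖ ^ 2 := by
    subst hxplus
    exact pow_le_pow_left₀ (norm_nonneg _)
      ((isMinOn_iff.2 (hproj w).2).norm_sub_le_norm_sub hXconv (hproj w).1 hxstar) 2
  have hexpand : ‖xstar - w‖ ^ 2
      = ‖xstar - x‖ ^ 2 + 2 * η * ⟪xstar - x, g + e⟫ + η ^ 2 * ‖g + e‖ ^ 2 := by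
    rw [show xstar - w = (xstar - x) + η • (g + e) by simp only [w]; abel, norm_add_sq_real,
      real_inner_smul_right, norm_smul, Real.norm_eq_abs, mul_pow, sq_abs]
    ring
  have hge : ‖g + e‖ ^ 2 ≤ 2 * ‖g‖ ^ 2 + 2 * ‖e‖ ^ 2 := by
    nlinarith [pow_le_pow_left₀ (norm_nonneg _) (norm_add_le g e) 2,
      add_sq_le (a := ‖g‖) (b := ‖e‖)]
  have hdescent : -⟪xstar - x, g⟫ - ⟪xstar - x, e⟫ - η * ‖g‖ ^ 2 - η * ‖e‖ ^ 2
      ≤ (‖xstar - x‖ ^ 2 - ‖xstar - xplus‖ ^ 2) / (2 * η) := by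
    rw [le_div_iff₀ (by positivity)]
    rw [inner_add_right] at hexpand
    nlinarith
  rw [real_inner_comm] at hfirst
  rw [norm_sub_rev x xstar]
  linarith

/-- One step of projected gradient descent with gradient error on a
`μ`-strongly convex differentiable function `h`: for `x⁺ = Π_X(x − η(∇h(x) + e))` and any
`x* ∈ X`,
`h(x) − h(x*) ≤ (‖x* − x‖² − ‖x* − x⁺‖²)/(2η) + ⟨x* − x, e⟩ + η‖∇h(x)‖² + η‖e‖²
  − (μ/2)‖x − x*‖²`. -/
theorem pgd_one_step {d : ℕ} (X : Set (EuclideanSpace ℝ (Fin d)))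
    (hXne : X.Nonempty) (hXcl : IsClosed X) (hXconv : Convex ℝ X)
    (h : EuclideanSpace ℝ (Fin d) → ℝ) (μ : ℝ) (hμ : 0 < μ)
    (hdiff : Differentiable ℝ h)
    (hsc : ConvexOn ℝ Set.univ (fun z => h z - μ / 2 * ‖z‖ ^ 2))
    (x xstar : EuclideanSpace ℝ (Fin d)) (hxstar : xstar ∈ X)
    (e : EuclideanSpace ℝ (Fin d)) (η : ℝ) (hη : 0 < η)
    (proj : EuclideanSpace ℝ (Fin d) → EuclideanSpace ℝ (Fin d))
    (hproj : ∀ w, proj w ∈ X ∧ ∀ z ∈ X, ‖proj w - w‖ ≤ ‖z - w‖)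
    (xplus : EuclideanSpace ℝ (Fin d))
    (hxplus : xplus = proj (x - η • (gradient h x + e))) :
    h x - h xstar ≤
      (‖xstar - x‖ ^ 2 - ‖xstar - xplus‖ ^ 2) / (2 * η) + ⟪xstar - x, e⟫ +
        η * ‖gradient h x‖ ^ 2 + η * ‖e‖ ^ 2 - μ / 2 * ‖x - xstar‖ ^ 2 :=
  pgd_one_step_general X hXconv h μ hdiff hsc x xstar hxstar e η hη proj hproj xplus hxplus
end

section
/- Per-iteration contraction with inexact gradients: Let C : ℝ^n → ℝ be differentiable with β′-Lipschitz gradient and μ-strongly convex, where 0 < μ < β′, and set γ = μ/(β′ − μ). Let X ⊆ ℝ^n be nonempty, closed and convex, let x, x* ∈ X, g ∈ ℝ^n, ε ≥ 0, and set x⁺ = Π_X(x − (1/β′)g). If ⟨∇C(x) − g, x⁺ − x⟩ ≤ ε and ⟨∇C(x) − g, x⁺ − x*⟩ ≤ ε, then C(x⁺) − C(x*) ≤ (1/(1 + γ))·(C(x) − C(x*)) + ε. (This is the single-step contraction underlying Theorem 2 of the paper.) -/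
/-!
Put `t = μ/β'` and compare `x⁺` with the point `z = x + t (x* - x)` of `X`. The descent lemma
and the variational inequality of the projection bound `C(x⁺)` by the `β'`-quadratic model of
`C` at `x`, evaluated at `z`, plus the error `⟪∇C(x) - g, x⁺ - z⟫`, which is a convex combination
of the two given error terms and hence at most `ε`. Strong convexity bounds the model value at
`z` by `t C(x*) + (1 - t) C(x)`: the choice of `t` makes the strong-convexity gap
`μ t (1 - t)/2 ‖x* - x‖²` exactly pay for the excess curvature `(β' - μ) t²/2 ‖x* - x‖²`.
Finally `1 - t = 1/(1 + γ)`.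
-/

open scoped RealInnerProductSpace

open Set

section
variable {E : Type*} [NormedAddCommGroup E] [InnerProductSpace ℝ E]

theorem ConvexOn.add_fderiv_sub_le {f : E → ℝ} {f' : E →L[ℝ] ℝ} {x : E}
    (hf : ConvexOn ℝ univ f) (hx : HasFDerivAt f f' x) (y : E) :
    f x + f' (y - x) ≤ f y := by
  have hline : ConvexOn ℝ univ (f ∘ AffineMap.lineMap (k := ℝ) x y) := by
    simpa using hf.comp_affineMap (AffineMap.lineMap x y)
  have hderiv : HasDerivAt (f ∘ AffineMap.lineMap (k := ℝ) x y) (f' (y - x)) 0 :=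
    hx.comp_hasDerivAt_of_eq 0 AffineMap.hasDerivAt_lineMap (AffineMap.lineMap_apply_zero x y).symm
  have hslope := hline.le_slope_of_hasDerivWithinAt_Ioi (mem_univ 0) (mem_univ 1) one_pos
    hderiv.hasDerivWithinAt
  simp only [slope_def_field, Function.comp_apply, AffineMap.lineMap_apply_zero,
    AffineMap.lineMap_apply_one, sub_zero, div_one] at hslope
  linarith

theorem real_inner_sub_le_zero_of_forall_norm_sub_le {X : Set E} (hX : Convex ℝ X) {u p : E}
    (hp : p ∈ X) (hmin : ∀ z ∈ X, ‖p - u‖ ≤ ‖z - u‖) {z : E} (hz : z ∈ X) :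
    ⟪u - p, z - p⟫ ≤ 0 := by
  have : Nonempty X := ⟨⟨p, hp⟩⟩
  refine (norm_eq_iInf_iff_real_inner_le_zero hX hp).mp (le_antisymm ?_ ?_) z hz
  · exact le_ciInf fun w => by simpa only [norm_sub_rev u] using hmin w w.2
  · exact ciInf_le ⟨0, fun r ⟨w, hw⟩ => hw ▸ norm_nonneg _⟩ (⟨p, hp⟩ : X)

theorem real_inner_sub_le_of_projected_step {X : Set E} (hX : Convex ℝ X) {β : ℝ} (hβ : 0 < β)
    {x g p : E} (hp : p ∈ X) (hmin : ∀ z ∈ X, ‖p - (x - (1 / β) • g)‖ ≤ ‖z - (x - (1 / β) • g)‖)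
    {z : E} (hz : z ∈ X) :
    ⟪g, p - z⟫ ≤ β / 2 * (‖z - x‖ ^ 2 - ‖p - x‖ ^ 2 - ‖p - z‖ ^ 2) := by
  have hvi := real_inner_sub_le_zero_of_forall_norm_sub_le hX hp hmin hz
  rw [sub_right_comm, inner_sub_left, real_inner_smul_left] at hvi
  have hpolar : ‖z - x‖ ^ 2 = ‖z - p‖ ^ 2 - 2 * ⟪x - p, z - p⟫ + ‖x - p‖ ^ 2 := by
    rw [← sub_sub_sub_cancel_right z x p, norm_sub_sq_real, real_inner_comm]
  have hscaled : β * ⟪x - p, z - p⟫ ≤ ⟪g, z - p⟫ := by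
    have := mul_le_mul_of_nonneg_left hvi hβ.le
    field_simp at this
    linarith
  rw [hpolar, norm_sub_rev z p, norm_sub_rev x p, ← neg_sub z p, inner_neg_right]
  linarith

variable [CompleteSpace E]

theorem StrongConvexOn.add_inner_add_sq_le {f : E → ℝ} {μ : ℝ} {x f' : E}
    (hf : StrongConvexOn univ μ f) (hx : HasGradientAt f f' x) (y : E) :
    f x + ⟪f', y - x⟫ + μ / 2 * ‖y - x‖ ^ 2 ≤ f y := by
  have h := (strongConvexOn_iff_convex.mp hf).add_fderiv_sub_le
    (hx.hasFDerivAt.sub ((hasStrictFDerivAt_norm_sq x).hasFDerivAt.const_mul (μ / 2))) y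
  have hexpand : ‖y‖ ^ 2 = ‖x‖ ^ 2 + 2 * ⟪x, y - x⟫ + ‖y - x‖ ^ 2 := by
    rw [← norm_add_sq_real, add_sub_cancel]
  simp only [sub_apply, smul_apply,
    InnerProductSpace.toDual_apply_apply, innerSL_apply_apply, smul_eq_mul, nsmul_eq_mul,
    Nat.cast_ofNat] at h
  rw [hexpand] at h
  linarith

theorem StrongConvexOn.add_inner_add_sq_le_secant {f : E → ℝ} {μ β : ℝ}
    (hf : StrongConvexOn univ μ f) (hμ : 0 < μ) (hμβ : μ ≤ β) {x f' : E}
    (hx : HasGradientAt f f' x) (y : E) :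
    f x + ⟪f', (μ / β) • (y - x)⟫ + β / 2 * ‖(μ / β) • (y - x)‖ ^ 2
      ≤ μ / β * f y + (1 - μ / β) * f x := by
  have hβ : 0 < β := hμ.trans_le hμβ
  set t := μ / β with ht
  have ht0 : 0 ≤ t := by positivity
  have ht1 : 0 ≤ 1 - t := sub_nonneg.2 ((div_le_one hβ).2 hμβ)
  have hfirst := hf.add_inner_add_sq_le hx (x + t • (y - x))
  have hsecant := hf.2 (mem_univ y) (mem_univ x) ht0 ht1 (add_sub_cancel t 1)
  have hcomb : t • y + (1 - t) • x = x + t • (y - x) := by module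
  rw [hcomb] at hsecant
  rw [add_sub_cancel_left] at hfirst
  have hnorm : ‖t • (y - x)‖ ^ 2 = t ^ 2 * ‖y - x‖ ^ 2 := by
    rw [norm_smul, mul_pow, Real.norm_eq_abs, sq_abs]
  simp only [smul_eq_mul] at hsecant
  rw [hnorm] at hfirst ⊢
  calc f x + ⟪f', t • (y - x)⟫ + β / 2 * (t ^ 2 * ‖y - x‖ ^ 2)
      = f x + ⟪f', t • (y - x)⟫ + μ / 2 * (t ^ 2 * ‖y - x‖ ^ 2)
          + t * (1 - t) * (μ / 2 * ‖y - x‖ ^ 2) := by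
        rw [ht]; field_simp; ring
    _ ≤ f (x + t • (y - x)) + t * (1 - t) * (μ / 2 * ‖y - x‖ ^ 2) := by gcongr
    _ ≤ t * f y + (1 - t) * f x := by linarith

theorem le_add_inner_gradient_add_sq_of_lipschitz {f : E → ℝ} {β : ℝ} (hf : Differentiable ℝ f)
    (hlip : ∀ z w, ‖gradient f z - gradient f w‖ ≤ β * ‖z - w‖) (x y : E) :
    f y ≤ f x + ⟪gradient f x, y - x⟫ + β / 2 * ‖y - x‖ ^ 2 := by
  set v := y - x
  set φ : ℝ → ℝ := fun t => f (x + t • v) - t * ⟪gradient f x, v⟫ - β / 2 * t ^ 2 * ‖v‖ ^ 2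
  have hφ (t : ℝ) : HasDerivAt φ
      (⟪gradient f (x + t • v), v⟫ - ⟪gradient f x, v⟫ - β * t * ‖v‖ ^ 2) t := by
    have hline : HasDerivAt (fun s : ℝ => x + s • v) v t := by
      simpa using ((hasDerivAt_id t).smul_const v).const_add x
    have hfline := (hf _).hasGradientAt.hasFDerivAt.comp_hasDerivAt t hline
    simp only [InnerProductSpace.toDual_apply_apply] at hfline
    refine ((hfline.sub ((hasDerivAt_id t).mul_const ⟪gradient f x, v⟫)).sub
      (((hasDerivAt_pow 2 t).const_mul (β / 2)).mul_const (‖v‖ ^ 2))).congr_deriv ?_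
    simp only [Nat.cast_ofNat, Nat.add_one_sub_one, pow_one]
    ring
  have hφ' : ∀ t ∈ interior (Ici (0 : ℝ)),
      ⟪gradient f (x + t • v), v⟫ - ⟪gradient f x, v⟫ - β * t * ‖v‖ ^ 2 ≤ 0 := by
    intro t ht
    rw [interior_Ici, mem_Ioi] at ht
    have := hlip (x + t • v) x
    rw [add_sub_cancel_left, norm_smul, Real.norm_of_nonneg ht.le] at this
    rw [← inner_sub_left, sub_nonpos]
    calc ⟪gradient f (x + t • v) - gradient f x, v⟫
        ≤ ‖gradient f (x + t • v) - gradient f x‖ * ‖v‖ := real_inner_le_norm _ _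
      _ ≤ β * (t * ‖v‖) * ‖v‖ := by gcongr
      _ = β * t * ‖v‖ ^ 2 := by ring
  have hanti : AntitoneOn φ (Ici 0) :=
    antitoneOn_of_hasDerivWithinAt_nonpos (convex_Ici 0)
      (fun t _ => (hφ t).continuousAt.continuousWithinAt) (fun t _ => (hφ t).hasDerivWithinAt) hφ'
  have h01 := hanti (mem_Ici.2 le_rfl) (mem_Ici.2 zero_le_one) zero_le_one
  simp only [φ, v, zero_smul, add_zero, one_smul, add_sub_cancel] at h01
  linarith

theorem le_of_inexact_projected_gradient_step {f : E → ℝ} {β : ℝ} (hβ : 0 < β)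
    (hf : Differentiable ℝ f) (hlip : ∀ z w, ‖gradient f z - gradient f w‖ ≤ β * ‖z - w‖)
    {X : Set E} (hX : Convex ℝ X) {x g p : E} (hp : p ∈ X)
    (hmin : ∀ z ∈ X, ‖p - (x - (1 / β) • g)‖ ≤ ‖z - (x - (1 / β) • g)‖) {z : E} (hz : z ∈ X) :
    f p ≤ f x + ⟪gradient f x, z - x⟫ + β / 2 * ‖z - x‖ ^ 2 + ⟪gradient f x - g, p - z⟫ := by
  have hdescent := le_add_inner_gradient_add_sq_of_lipschitz hf hlip x p
  have hstep := real_inner_sub_le_of_projected_step hX hβ hp hmin hz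
  have hsplit : ⟪gradient f x, p - x⟫
      = ⟪gradient f x, z - x⟫ + ⟪g, p - z⟫ + ⟪gradient f x - g, p - z⟫ := by
    rw [inner_sub_left, ← sub_add_sub_cancel p z x, inner_add_right]
    ring
  have hβpz : 0 ≤ β / 2 * ‖p - z‖ ^ 2 := by positivity
  linarith

end

theorem inexact_pgd_contraction_general {n : ℕ} (C : EuclideanSpace ℝ (Fin n) → ℝ) (β' μ : ℝ)
    (hμ : 0 < μ) (hμβ : μ < β') (hdiff : Differentiable ℝ C)
    (hlip : ∀ z w, ‖gradient C z - gradient C w‖ ≤ β' * ‖z - w‖)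
    (hsc : ConvexOn ℝ Set.univ (fun z => C z - μ / 2 * ‖z‖ ^ 2))
    (X : Set (EuclideanSpace ℝ (Fin n)))
    (hXconv : Convex ℝ X)
    (x xstar : EuclideanSpace ℝ (Fin n)) (hx : x ∈ X) (hxstar : xstar ∈ X)
    (g : EuclideanSpace ℝ (Fin n)) (ε : ℝ)
    (proj : EuclideanSpace ℝ (Fin n) → EuclideanSpace ℝ (Fin n))
    (hproj : ∀ w, proj w ∈ X ∧ ∀ z ∈ X, ‖proj w - w‖ ≤ ‖z - w‖)
    (xplus : EuclideanSpace ℝ (Fin n)) (hxplus : xplus = proj (x - (1 / β') • g))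
    (herr1 : ⟪gradient C x - g, xplus - x⟫ ≤ ε)
    (herr2 : ⟪gradient C x - g, xplus - xstar⟫ ≤ ε) :
    C xplus - C xstar ≤
      (1 / (1 + μ / (β' - μ))) * (C x - C xstar) + ε := by
  have hβ : 0 < β' := hμ.trans hμβ
  have ht : μ / β' ∈ Icc (0 : ℝ) 1 := ⟨by positivity, (div_le_one hβ).2 hμβ.le⟩
  obtain ⟨hpX, hmin⟩ := hproj (x - (1 / β') • g)
  rw [← hxplus] at hpX hmin
  have hstep := le_of_inexact_projected_gradient_step hβ hdiff hlip hXconv hpX hmin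
    (hXconv.add_smul_sub_mem hx hxstar ht)
  rw [add_sub_cancel_left] at hstep
  have hmodel := (strongConvexOn_iff_convex.mpr hsc).add_inner_add_sq_le_secant hμ hμβ.le
    (hdiff x).hasGradientAt xstar
  have herr : ⟪gradient C x - g, xplus - (x + (μ / β') • (xstar - x))⟫ ≤ ε := by
    have hsplit : xplus - (x + (μ / β') • (xstar - x))
        = (μ / β') • (xplus - xstar) + (1 - μ / β') • (xplus - x) := by module
    rw [hsplit, inner_add_right, real_inner_smul_right, real_inner_smul_right]
    calc μ / β' * _ + (1 - μ / β') * _ ≤ μ / β' * ε + (1 - μ / β') * ε := by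
          gcongr; exact sub_nonneg.2 ht.2
      _ = ε := by ring
  have hcoef : 1 / (1 + μ / (β' - μ)) = 1 - μ / β' := by
    field_simp [hβ.ne', (sub_pos.2 hμβ).ne']
    ring
  rw [hcoef]
  linarith

/-- Per-iteration contraction of projected gradient descent with an
inexact gradient: with `0 < μ < β′`, `γ = μ/(β′ − μ)`, `x, x* ∈ X`,
`x⁺ = Π_X(x − (1/β′)g)`, and inner-product error bounds
`⟨∇C(x) − g, x⁺ − x⟩ ≤ ε` and `⟨∇C(x) − g, x⁺ − x*⟩ ≤ ε`, one has
`C(x⁺) − C(x*) ≤ (1/(1 + γ))(C(x) − C(x*)) + ε`. -/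
theorem inexact_pgd_contraction {n : ℕ} (C : EuclideanSpace ℝ (Fin n) → ℝ) (β' μ : ℝ)
    (hμ : 0 < μ) (hμβ : μ < β') (hdiff : Differentiable ℝ C)
    (hlip : ∀ z w, ‖gradient C z - gradient C w‖ ≤ β' * ‖z - w‖)
    (hsc : ConvexOn ℝ Set.univ (fun z => C z - μ / 2 * ‖z‖ ^ 2))
    (X : Set (EuclideanSpace ℝ (Fin n)))
    (hXne : X.Nonempty) (hXcl : IsClosed X) (hXconv : Convex ℝ X)
    (x xstar : EuclideanSpace ℝ (Fin n)) (hx : x ∈ X) (hxstar : xstar ∈ X)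
    (g : EuclideanSpace ℝ (Fin n)) (ε : ℝ) (hε : 0 ≤ ε)
    (proj : EuclideanSpace ℝ (Fin n) → EuclideanSpace ℝ (Fin n))
    (hproj : ∀ w, proj w ∈ X ∧ ∀ z ∈ X, ‖proj w - w‖ ≤ ‖z - w‖)
    (xplus : EuclideanSpace ℝ (Fin n)) (hxplus : xplus = proj (x - (1 / β') • g))
    (herr1 : ⟪gradient C x - g, xplus - x⟫ ≤ ε)
    (herr2 : ⟪gradient C x - g, xplus - xstar⟫ ≤ ε) :
    C xplus - C xstar ≤
      (1 / (1 + μ / (β' - μ))) * (C x - C xstar) + ε :=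
  inexact_pgd_contraction_general C β' μ hμ hμβ hdiff hlip hsc X hXconv x xstar hx hxstar g ε proj
    hproj xplus hxplus herr1 herr2
end
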